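/- For all natural numbers p and a, H₀(p, a) ≤ H₀(p + 2, a + 1). (Adding a disjoint two-element chain as a new connected component is injective on isomorphism classes of posets without isolated points.) -/

import Mathlib

/-- The number of covering pairs (arcs of the Hasse diagram) of a partial order `P`. -/
noncomputable def nCovers {α : Type*} (P : PartialOrder α) : ℕ :=
  letI := P
  Nat.card {q : α × α // q.1 ⋖ q.2}

/-- `P` has no isolated points: every element belongs to some covering pair. -/
def NoIsolated {α : Type*} (P : PartialOrder α) : Prop :=
  letI := P
  ∀ x : α, ∃ y, x ⋖ y ∨ y ⋖ x

/-- Two partial orders on `Fin p` are equivalent iff they are order-isomorphic. -/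
def posetIsoSetoid (p : ℕ) : Setoid (PartialOrder (Fin p)) where
  r P Q := Nonempty (@OrderIso (Fin p) (Fin p) P.toPreorder.toLE Q.toPreorder.toLE)
  iseqv := by
    refine ⟨fun P => ⟨@OrderIso.refl _ P.toPreorder.toLE⟩, ?_, ?_⟩
    · rintro P Q ⟨e⟩
      exact ⟨@OrderIso.symm _ _ P.toPreorder.toLE Q.toPreorder.toLE e⟩
    · rintro P Q R ⟨e⟩ ⟨f⟩
      exact ⟨@OrderIso.trans _ _ _ P.toPreorder.toLE Q.toPreorder.toLE R.toPreorder.toLE e f⟩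

/-- `H p a`: the number of isomorphism classes of partial orders on `Fin p`
with exactly `a` covering pairs. -/
noncomputable def H (p a : ℕ) : ℕ :=
  Nat.card (Quotient ((posetIsoSetoid p).comap
    (Subtype.val : {P : PartialOrder (Fin p) // nCovers P = a} → PartialOrder (Fin p))))

/-- `H0 p a`: the number of isomorphism classes of partial orders on `Fin p`
with exactly `a` covering pairs and no isolated point. -/
noncomputable def H0 (p a : ℕ) : ℕ :=
  Nat.card (Quotient ((posetIsoSetoid p).comap
    (Subtype.val : {P : PartialOrder (Fin p) // nCovers P = a ∧ NoIsolated P} →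
      PartialOrder (Fin p))))

open Sum

open Sum

section SumCovers
variable {α β : Type*} [PartialOrder α] [PartialOrder β]

theorem inl_covBy_inl_iff {a b : α} : (inl a : α ⊕ β) ⋖ inl b ↔ a ⋖ b := by
  constructor
  · rintro ⟨h1, h2⟩
    exact ⟨Sum.inl_lt_inl_iff.1 h1, fun c hc hc' =>
      h2 (Sum.inl_lt_inl_iff.2 hc) (Sum.inl_lt_inl_iff.2 hc')⟩
  · rintro ⟨h1, h2⟩
    refine ⟨Sum.inl_lt_inl_iff.2 h1, ?_⟩
    rintro (c | c) hc hc'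
    · exact h2 (Sum.inl_lt_inl_iff.1 hc) (Sum.inl_lt_inl_iff.1 hc')
    · exact Sum.not_inl_lt_inr hc

theorem inr_covBy_inr_iff {a b : β} : (inr a : α ⊕ β) ⋖ inr b ↔ a ⋖ b := by
  constructor
  · rintro ⟨h1, h2⟩
    exact ⟨Sum.inr_lt_inr_iff.1 h1, fun c hc hc' =>
      h2 (Sum.inr_lt_inr_iff.2 hc) (Sum.inr_lt_inr_iff.2 hc')⟩
  · rintro ⟨h1, h2⟩
    refine ⟨Sum.inr_lt_inr_iff.2 h1, ?_⟩
    rintro (c | c) hc hc'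
    · exact Sum.not_inr_lt_inl hc
    · exact h2 (Sum.inr_lt_inr_iff.1 hc) (Sum.inr_lt_inr_iff.1 hc')

theorem nCovers_sum [Finite α] [Finite β] :
    nCovers (inferInstance : PartialOrder (α ⊕ β)) =
      nCovers (inferInstance : PartialOrder α) + nCovers (inferInstance : PartialOrder β) := by
  simp only [nCovers]
  rw [← Nat.card_sum]
  refine (Nat.card_congr (Equiv.ofBijective ?_ ⟨?_, ?_⟩)).symm
  · exact Sum.elim (fun q => ⟨(inl q.1.1, inl q.1.2), inl_covBy_inl_iff.2 q.2⟩)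
      (fun q => ⟨(inr q.1.1, inr q.1.2), inr_covBy_inr_iff.2 q.2⟩)
  · rintro (⟨⟨a, b⟩, h⟩ | ⟨⟨a, b⟩, h⟩) (⟨⟨c, d⟩, h'⟩ | ⟨⟨c, d⟩, h'⟩) he <;>
      simp_all
  · rintro ⟨⟨x | x, y | y⟩, h⟩
    · exact ⟨Sum.inl ⟨(x, y), inl_covBy_inl_iff.1 h⟩, rfl⟩
    · exact absurd h.lt Sum.not_inl_lt_inr
    · exact absurd h.lt Sum.not_inr_lt_inl
    · exact ⟨Sum.inr ⟨(x, y), inr_covBy_inr_iff.1 h⟩, rfl⟩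

theorem fin2_covBy : (0 : Fin 2) ⋖ 1 := by
  constructor
  · decide
  · intro c h1 h2
    omega

theorem nCovers_fin2 : nCovers (inferInstance : PartialOrder (Fin 2)) = 1 := by
  simp only [nCovers]
  have : Unique {q : Fin 2 × Fin 2 // q.1 ⋖ q.2} := by
    refine ⟨⟨⟨(0, 1), fin2_covBy⟩⟩, ?_⟩
    rintro ⟨⟨x, y⟩, h⟩
    have hlt : x < y := h.lt
    have hx : x = 0 := Fin.ext (by omega)
    have hy : y = 1 := Fin.ext (by omega)
    subst hx; subst hy; rfl
  exact Nat.card_unique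
section Invariance
variable {α β : Type*} [PartialOrder α] [PartialOrder β]

theorem nCovers_congr (e : α ≃o β) :
    nCovers (inferInstance : PartialOrder α) = nCovers (inferInstance : PartialOrder β) := by
  simp only [nCovers]
  exact Nat.card_congr ((Equiv.prodCongr e.toEquiv e.toEquiv).subtypeEquiv fun q =>
    (apply_covBy_apply_iff (a := q.1) (b := q.2) e).symm)

theorem noIsolated_congr (e : α ≃o β) (h : NoIsolated (inferInstance : PartialOrder α)) :
    NoIsolated (inferInstance : PartialOrder β) := by
  intro x
  obtain ⟨y, hy | hy⟩ := h (e.symm x)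
  · refine ⟨e y, Or.inl ?_⟩
    have := (apply_covBy_apply_iff e).2 hy
    rwa [e.apply_symm_apply] at this
  · refine ⟨e y, Or.inr ?_⟩
    have := (apply_covBy_apply_iff e).2 hy
    rwa [e.apply_symm_apply] at this

theorem noIsolated_sum (hα : NoIsolated (inferInstance : PartialOrder α)) :
    NoIsolated (inferInstance : PartialOrder (α ⊕ Fin 2)) := by
  rintro (x | i)
  · obtain ⟨y, h | h⟩ := hα x
    · exact ⟨inl y, Or.inl (inl_covBy_inl_iff.2 h)⟩
    · exact ⟨inl y, Or.inr (inl_covBy_inl_iff.2 h)⟩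
  · by_cases hi : i = 0
    · exact ⟨inr 1, Or.inl (by rw [hi]; exact inr_covBy_inr_iff.2 fin2_covBy)⟩
    · have : i = 1 := by omega
      exact ⟨inr 0, Or.inr (by rw [this]; exact inr_covBy_inr_iff.2 fin2_covBy)⟩

end Invariance

section Pair
variable {α β : Type*} [PartialOrder α] [PartialOrder β]

/-- `x, y` form an isolated covering pair (a two-element connected component). -/
def IsPair (x y : α) : Prop :=
  x < y ∧ ∀ z, (z ≤ x ∨ x ≤ z ∨ z ≤ y ∨ y ≤ z) → z = x ∨ z = y

namespace IsPair

variable {x y z w a b : α}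

theorem le_left_iff (h : IsPair x y) : a ≤ x ↔ a = x := by
  constructor
  · intro ha
    rcases h.2 a (Or.inl ha) with rfl | rfl
    · rfl
    · exact absurd ha h.1.not_ge
  · rintro rfl; rfl

theorem left_le_iff (h : IsPair x y) : x ≤ a ↔ a = x ∨ a = y := by
  constructor
  · intro ha; exact h.2 a (Or.inr (Or.inl ha))
  · rintro (rfl | rfl)
    · rfl
    · exact h.1.le

theorem le_right_iff (h : IsPair x y) : a ≤ y ↔ a = x ∨ a = y := by
  constructor
  · intro ha; exact h.2 a (Or.inr (Or.inr (Or.inl ha)))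
  · rintro (rfl | rfl)
    · exact h.1.le
    · rfl

theorem right_le_iff (h : IsPair x y) : y ≤ a ↔ a = y := by
  constructor
  · intro ha
    rcases h.2 a (Or.inr (Or.inr (Or.inr ha))) with rfl | rfl
    · exact absurd ha h.1.not_ge
    · rfl
  · rintro rfl; rfl

theorem ne (h : IsPair x y) : x ≠ y := h.1.ne

theorem congr (e : α ≃o β) (h : IsPair x y) : IsPair (e x) (e y) := by
  refine ⟨by simpa using h.1, fun z hz => ?_⟩
  have : e.symm z = x ∨ e.symm z = y := by
    refine h.2 _ ?_
    rcases hz with hz | hz | hz | hz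
    · exact Or.inl (by simpa using e.symm.monotone hz)
    · exact Or.inr (Or.inl (by simpa using e.symm.monotone hz))
    · exact Or.inr (Or.inr (Or.inl (by simpa using e.symm.monotone hz)))
    · exact Or.inr (Or.inr (Or.inr (by simpa using e.symm.monotone hz)))
  rcases this with hh | hh
  · exact Or.inl (by rw [← hh, e.apply_symm_apply])
  · exact Or.inr (by rw [← hh, e.apply_symm_apply])

theorem distinct (hxy : IsPair x y) (hzw : IsPair z w) (hxz : x ≠ z) :
    x ≠ w ∧ y ≠ z ∧ y ≠ w := by
  refine ⟨?_, ?_, ?_⟩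
  · rintro rfl
    rcases hxy.le_left_iff.1 hzw.1.le with rfl
    exact hxz rfl
  · rintro rfl
    rcases hxy.right_le_iff.1 hzw.1.le with rfl
    exact hzw.1.ne rfl
  · rintro rfl
    rcases hzw.le_right_iff.1 hxy.1.le with rfl | rfl
    · exact hxz rfl
    · exact hxy.1.ne rfl
end IsPair

/-- The isolated pair `(inr 0, inr 1)` in `α ⊕ Fin 2`. -/
theorem isPair_inr : IsPair (inr 0 : α ⊕ Fin 2) (inr 1) := by
  constructor
  · exact Sum.inr_lt_inr_iff.2 fin2_covBy.lt
  · rintro (z | i) hz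
    · rcases hz with hz | hz | hz | hz
      · exact absurd hz Sum.not_inl_le_inr
      · exact absurd hz Sum.not_inr_le_inl
      · exact absurd hz Sum.not_inl_le_inr
      · exact absurd hz Sum.not_inr_le_inl
    · by_cases hi : i = 0
      · subst hi; exact Or.inl rfl
      · have : i = 1 := by omega
        subst this; exact Or.inr rfl

end Pair
section Swap
variable {α β : Type*} [PartialOrder α] [PartialOrder β]
variable {x y z w : α}

/-- Swapping two isolated pairs as a permutation. -/
noncomputable def pairSwapEquiv (x y z w : α) : α ≃ α :=
  letI := Classical.decEq α
  (Equiv.swap x z).trans (Equiv.swap y w)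

theorem pairSwap_spec (hxy : IsPair x y) (hzw : IsPair z w) (hxz : x ≠ z) :
    pairSwapEquiv x y z w x = z ∧ pairSwapEquiv x y z w y = w ∧
    pairSwapEquiv x y z w z = x ∧ pairSwapEquiv x y z w w = y ∧
    ∀ a, a ≠ x → a ≠ y → a ≠ z → a ≠ w → pairSwapEquiv x y z w a = a := by
  letI := Classical.decEq α
  obtain ⟨hxw, hyz, hyw⟩ := hxy.distinct hzw hxz
  have hxy' := hxy.ne
  have hzw' := hzw.ne
  refine ⟨?_, ?_, ?_, ?_, ?_⟩
  · simp only [pairSwapEquiv, Equiv.trans_apply, Equiv.swap_apply_left]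
    exact Equiv.swap_apply_of_ne_of_ne hyz.symm hzw'
  · simp only [pairSwapEquiv, Equiv.trans_apply]
    rw [Equiv.swap_apply_of_ne_of_ne hxy'.symm hyz, Equiv.swap_apply_left]
  · simp only [pairSwapEquiv, Equiv.trans_apply, Equiv.swap_apply_right]
    exact Equiv.swap_apply_of_ne_of_ne hxy' hxw
  · simp only [pairSwapEquiv, Equiv.trans_apply]
    rw [Equiv.swap_apply_of_ne_of_ne hxw.symm hzw'.symm, Equiv.swap_apply_right]
  · intro a h1 h2 h3 h4
    simp only [pairSwapEquiv, Equiv.trans_apply]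
    rw [Equiv.swap_apply_of_ne_of_ne h1 h3, Equiv.swap_apply_of_ne_of_ne h2 h4]

theorem pairSwap_mono (hxy : IsPair x y) (hzw : IsPair z w) (hxz : x ≠ z)
    {a b : α} (hab : a ≤ b) : pairSwapEquiv x y z w a ≤ pairSwapEquiv x y z w b := by
  obtain ⟨hx, hy, hz, hw, hfix⟩ := pairSwap_spec hxy hzw hxz
  by_cases hax : a = x
  · subst hax
    rcases hxy.left_le_iff.1 hab with rfl | rfl
    · rw [hx]
    · rw [hx, hy]; exact hzw.1.le
  by_cases hay : a = y
  · subst hay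
    rcases hxy.right_le_iff.1 hab with rfl
    rw [hy]
  by_cases haz : a = z
  · subst haz
    rcases hzw.left_le_iff.1 hab with rfl | rfl
    · rw [hz]
    · rw [hz, hw]; exact hxy.1.le
  by_cases haw : a = w
  · subst haw
    rcases hzw.right_le_iff.1 hab with rfl
    rw [hw]
  · rw [hfix a hax hay haz haw]
    by_cases hbx : b = x
    · subst hbx; exact absurd (hxy.le_left_iff.1 hab) hax
    by_cases hby : b = y
    · subst hby
      rcases hxy.le_right_iff.1 hab with rfl | rfl
      · exact absurd rfl hax
      · exact absurd rfl hay
    by_cases hbz : b = z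
    · subst hbz; exact absurd (hzw.le_left_iff.1 hab) haz
    by_cases hbw : b = w
    · subst hbw
      rcases hzw.le_right_iff.1 hab with rfl | rfl
      · exact absurd rfl haz
      · exact absurd rfl haw
    · rw [hfix b hbx hby hbz hbw]; exact hab

theorem pairSwap_involutive (hxy : IsPair x y) (hzw : IsPair z w) (hxz : x ≠ z)
    (a : α) : pairSwapEquiv x y z w (pairSwapEquiv x y z w a) = a := by
  obtain ⟨hx, hy, hz, hw, hfix⟩ := pairSwap_spec hxy hzw hxz
  by_cases hax : a = x
  · subst hax; rw [hx, hz]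
  by_cases hay : a = y
  · subst hay; rw [hy, hw]
  by_cases haz : a = z
  · subst haz; rw [hz, hx]
  by_cases haw : a = w
  · subst haw; rw [hw, hy]
  · rw [hfix a hax hay haz haw, hfix a hax hay haz haw]

/-- Swapping two isolated pairs is an order automorphism. -/
noncomputable def pairSwap (hxy : IsPair x y) (hzw : IsPair z w) (hxz : x ≠ z) : α ≃o α :=
  { toEquiv := pairSwapEquiv x y z w
    map_rel_iff' := by
      intro a b
      constructor
      · intro h
        have := pairSwap_mono hxy hzw hxz h
        rwa [pairSwap_involutive hxy hzw hxz, pairSwap_involutive hxy hzw hxz] at this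
      · exact pairSwap_mono hxy hzw hxz }

theorem pairSwap_apply_left (hxy : IsPair x y) (hzw : IsPair z w) (hxz : x ≠ z) :
    pairSwap hxy hzw hxz x = z := by
  exact (pairSwap_spec hxy hzw hxz).1

theorem pairSwap_apply_right (hxy : IsPair x y) (hzw : IsPair z w) (hxz : x ≠ z) :
    pairSwap hxy hzw hxz y = w := by
  exact (pairSwap_spec hxy hzw hxz).2.1

end Swap
section Cancel
variable {α β : Type*} [PartialOrder α] [PartialOrder β]

/-- If a sum order iso fixes the `inr` part pointwise, it restricts to an iso of the
`inl` parts. -/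
theorem exists_orderIso_of_fix (f : (α ⊕ Fin 2) ≃o (β ⊕ Fin 2))
    (h0 : f (inr 0) = inr 0) (h1 : f (inr 1) = inr 1) : Nonempty (α ≃o β) := by
  have hinr : ∀ i : Fin 2, f (inr i) = inr i := by
    intro i
    by_cases hi : i = 0
    · rw [hi]; exact h0
    · have : i = 1 := by omega
      rw [this]; exact h1
  have hinr' : ∀ i : Fin 2, f.symm (inr i) = inr i := by
    intro i; rw [← hinr i, f.symm_apply_apply]
  have H : ∀ a : α, ∃ b : β, f (inl a) = inl b := by
    intro a
    rcases hfa : f (inl a) with b | i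
    · exact ⟨b, rfl⟩
    · exfalso
      have : (inl a : α ⊕ Fin 2) = inr i := by
        rw [← f.symm_apply_apply (inl a), hfa, hinr']
      exact Sum.inl_ne_inr this
  have H' : ∀ b : β, ∃ a : α, f.symm (inl b) = inl a := by
    intro b
    rcases hfb : f.symm (inl b) with a | i
    · exact ⟨a, rfl⟩
    · exfalso
      have : (inl b : β ⊕ Fin 2) = inr i := by
        rw [← f.apply_symm_apply (inl b), hfb, hinr]
      exact Sum.inl_ne_inr this
  refine ⟨{ toFun := fun a => (H a).choose, invFun := fun b => (H' b).choose,
            left_inv := ?_, right_inv := ?_, map_rel_iff' := ?_ }⟩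
  · intro a
    show (H' ((H a).choose)).choose = a
    have h2 := (H' ((H a).choose)).choose_spec
    have h3 : f.symm (inl (H a).choose) = inl a := by
      rw [← (H a).choose_spec, f.symm_apply_apply]
    exact (Sum.inl_injective (h3.symm.trans h2)).symm
  · intro b
    show (H ((H' b).choose)).choose = b
    have h2 := (H ((H' b).choose)).choose_spec
    have h3 : f (inl (H' b).choose) = inl b := by
      rw [← (H' b).choose_spec, f.apply_symm_apply]
    exact (Sum.inl_injective (h3.symm.trans h2)).symm
  · intro a b
    simp only [Equiv.coe_fn_mk]
    rw [← Sum.inl_le_inl_iff (β := Fin 2), ← (H a).choose_spec, ← (H b).choose_spec,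
      f.le_iff_le, Sum.inl_le_inl_iff]

/-- Cancellation: an iso of sums with a two-chain yields an iso of the summands. -/
theorem cancel_pair (f : (α ⊕ Fin 2) ≃o (β ⊕ Fin 2)) : Nonempty (α ≃o β) := by
  have hpair : IsPair (f (inr 0)) (f (inr 1)) := isPair_inr.congr f
  rcases hc0 : f (inr 0) with u | j
  · -- `f (inr 0) = inl u`; then `f (inr 1) = inl v`
    rw [hc0] at hpair
    have hlt := hpair.1
    rcases hc1 : f (inr 1) with v | k
    · rw [hc1] at hpair hlt
      -- swap the pairs
      have hne : (inl u : β ⊕ Fin 2) ≠ inr 0 := Sum.inl_ne_inr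
      let σ := pairSwap hpair isPair_inr hne
      refine exists_orderIso_of_fix (f.trans σ) ?_ ?_
      · show σ (f (inr 0)) = inr 0
        rw [hc0]
        exact pairSwap_apply_left hpair isPair_inr hne
      · show σ (f (inr 1)) = inr 1
        rw [hc1]
        exact pairSwap_apply_right hpair isPair_inr hne
    · rw [hc1] at hlt
      exact absurd hlt Sum.not_inl_lt_inr
  · -- `f (inr 0) = inr j`; then everything stays put
    rw [hc0] at hpair
    have hlt := hpair.1
    rcases hc1 : f (inr 1) with v | k
    · rw [hc1] at hlt
      exact absurd hlt Sum.not_inr_lt_inl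
    · rw [hc1] at hlt
      have hjk : j < k := Sum.inr_lt_inr_iff.1 hlt
      have hj : j = 0 := by omega
      have hk : k = 1 := by omega
      subst hj; subst hk
      exact exists_orderIso_of_fix f hc0 hc1

end Cancel
section SumCongrIso
variable {α β γ δ : Type*} [PartialOrder α] [PartialOrder β] [PartialOrder γ] [PartialOrder δ]

/-- Order isomorphism congruence for disjoint sums. -/
def sumCongrIso (e : α ≃o β) (g : γ ≃o δ) : (α ⊕ γ) ≃o (β ⊕ δ) where
  toEquiv := Equiv.sumCongr e.toEquiv g.toEquiv
  map_rel_iff' := by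
    rintro (a | a) (b | b) <;>
      simp [Sum.inl_le_inl_iff, Sum.inr_le_inr_iff, Sum.not_inl_le_inr, Sum.not_inr_le_inl,
        e.le_iff_le, g.le_iff_le]

/-- Abstract congruence step: if `γ`, `δ` are isomorphic to `α ⊕ Fin 2`, `β ⊕ Fin 2`
and `α ≃o β`, then `γ ≃o δ`. -/
theorem extend_congr_aux (iα : (α ⊕ Fin 2) ≃o γ) (iβ : (β ⊕ Fin 2) ≃o δ) (e : α ≃o β) :
    Nonempty (γ ≃o δ) :=
  ⟨iα.symm.trans ((sumCongrIso e (OrderIso.refl (Fin 2))).trans iβ)⟩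

/-- Abstract cancellation step. -/
theorem cancel_aux (iα : (α ⊕ Fin 2) ≃o γ) (iβ : (β ⊕ Fin 2) ≃o δ) (e : γ ≃o δ) :
    Nonempty (α ≃o β) :=
  cancel_pair ((iα.trans e).trans iβ.symm)

theorem nCovers_sum_iso [Finite α] (i : (α ⊕ Fin 2) ≃o γ) :
    nCovers (inferInstance : PartialOrder γ) = nCovers (inferInstance : PartialOrder α) + 1 := by
  have h1 := nCovers_congr i
  rw [nCovers_sum, nCovers_fin2] at h1
  exact h1.symm

theorem noIsolated_sum_iso (i : (α ⊕ Fin 2) ≃o γ)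
    (h : NoIsolated (inferInstance : PartialOrder α)) :
    NoIsolated (inferInstance : PartialOrder γ) :=
  noIsolated_congr i (noIsolated_sum h)

end SumCongrIso

section Extend
variable {p : ℕ}

/-- The disjoint sum of `P` and the two-element chain, as a partial order. -/
noncomputable def sumPO (P : PartialOrder (Fin p)) : PartialOrder (Fin p ⊕ Fin 2) :=
  @Sum.instPartialOrder (Fin p) (Fin 2) P inferInstance

/-- Extend a partial order on `Fin p` by a disjoint two-element chain. -/
noncomputable def extendOrder (P : PartialOrder (Fin p)) : PartialOrder (Fin (p + 2)) :=
  @PartialOrder.lift (Fin (p + 2)) (Fin p ⊕ Fin 2) (sumPO P)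
    (finSumFinEquiv (m := p) (n := 2)).symm finSumFinEquiv.symm.injective

/-- The canonical order isomorphism between the sum order and the extended order. -/
noncomputable def extendIso (P : PartialOrder (Fin p)) :
    @OrderIso (Fin p ⊕ Fin 2) (Fin (p + 2))
      (@Sum.instLESum (Fin p) (Fin 2) P.toPreorder.toLE inferInstance)
      (extendOrder P).toPreorder.toLE :=
  { toEquiv := finSumFinEquiv
    map_rel_iff' := @fun a b => by
      constructor
      · intro h
        have h' : @LE.le (Fin p ⊕ Fin 2)
            (@Sum.instLESum (Fin p) (Fin 2) P.toPreorder.toLE inferInstance)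
            (finSumFinEquiv.symm (finSumFinEquiv a))
            (finSumFinEquiv.symm (finSumFinEquiv b)) := h
        simpa using h'
      · intro h
        show @LE.le (Fin p ⊕ Fin 2)
            (@Sum.instLESum (Fin p) (Fin 2) P.toPreorder.toLE inferInstance)
            (finSumFinEquiv.symm (finSumFinEquiv a))
            (finSumFinEquiv.symm (finSumFinEquiv b))
        simpa using h }

theorem nCovers_extendOrder (P : PartialOrder (Fin p)) :
    nCovers (extendOrder P) = nCovers P + 1 :=
  @nCovers_sum_iso (Fin p) (Fin (p + 2)) P (extendOrder P) _ (extendIso P)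

theorem noIsolated_extendOrder (P : PartialOrder (Fin p)) (h : NoIsolated P) :
    NoIsolated (extendOrder P) :=
  @noIsolated_sum_iso (Fin p) (Fin (p + 2)) P (extendOrder P) (extendIso P) h

end Extend

instance finitePartialOrder {γ : Type*} [Finite γ] : Finite (PartialOrder γ) :=
  Finite.of_injective (fun P => (fun a b => (letI := P; a ≤ b) : γ → γ → Prop))
    (fun _ _ h => PartialOrder.ext fun a b => iff_of_eq (congrFun (congrFun h a) b))

/-- `H₀ p a ≤ H₀ (p+2) (a+1)`: adding a disjoint two-element chain is injective on
isomorphism classes of posets without isolated points. -/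
theorem H0_le_H0_add_pair (p a : ℕ) : H0 p a ≤ H0 (p + 2) (a + 1) := by
  have key : ∀ P : {P : PartialOrder (Fin p) // nCovers P = a ∧ NoIsolated P},
      nCovers (extendOrder P.1) = a + 1 ∧ NoIsolated (extendOrder P.1) := fun P =>
    ⟨by rw [nCovers_extendOrder, P.2.1], noIsolated_extendOrder _ P.2.2⟩
  let F : {P : PartialOrder (Fin p) // nCovers P = a ∧ NoIsolated P} →
      {P : PartialOrder (Fin (p + 2)) // nCovers P = a + 1 ∧ NoIsolated P} :=
    fun P => ⟨extendOrder P.1, key P⟩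
  have resp : Relator.LiftFun ((posetIsoSetoid p).comap Subtype.val).r
      ((posetIsoSetoid (p + 2)).comap Subtype.val).r F F := by
    rintro P Q ⟨e⟩
    exact @extend_congr_aux (Fin p) (Fin p) (Fin (p + 2)) (Fin (p + 2))
      P.1 Q.1 (extendOrder P.1) (extendOrder Q.1) (extendIso P.1) (extendIso Q.1) e
  have inj : Function.Injective (Quotient.map' F resp) := by
    intro q1 q2
    refine Quotient.inductionOn₂' q1 q2 fun P Q h => ?_
    change Quotient.mk'' (F P) = Quotient.mk'' (F Q) at h
    apply Quotient.sound'
    obtain ⟨e⟩ := Quotient.exact' h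
    exact @cancel_aux (Fin p) (Fin p) (Fin (p + 2)) (Fin (p + 2))
      P.1 Q.1 (extendOrder P.1) (extendOrder Q.1) (extendIso P.1) (extendIso Q.1) e
  unfold H0
  exact Nat.card_le_card_of_injective _ inj
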